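/- arXiv:1810.10491 — 2 statements merged into one kernel-verified Lean document; each statement's English description precedes it below -/
import Mathlib

section
/- The Euclidean norm is a gyronorm on the Einstein gyrogroup; in particular, ‖u ⊕_E v‖ ≤ (‖u‖ + ‖v‖)/(1 + ‖u‖‖v‖) ≤ ‖u‖ + ‖v‖ for all u, v ∈ 𝔹, and consequently the Einstein gyrometric d_e(u, v) = ‖(−u) ⊕_E v‖ is a metric on the open unit ball 𝔹 of ℝⁿ. -/
open scoped RealInnerProductSpace

/-!
Everything rests on the identity
`(1 - ⟪u ⊕ a, u ⊕ b⟫)(1 + ⟪u, a⟫)(1 + ⟪u, b⟫) = (1 - ‖u‖²)(1 - ⟪a, b⟫)`.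
For `a = b` it computes `1 - ‖u ⊕ a‖²`, hence `1 - d_e(u, v)² = (1 - ‖u‖²)(1 - ‖v‖²)/(1 - ⟪u, v⟫)²`,
which is symmetric in `u, v` and equals `1` only for `u = v`. In general it shows that left
gyrotranslations `x ↦ u ⊕ x` preserve `d_e`; since `gyr[u,v]w = ⊖(u ⊕ v) ⊕ (u ⊕ (v ⊕ w))`,
this gives `‖gyr[u,v]w‖ = d_e(v, v ⊕ w) = d_e(0, w) = ‖w‖`.

Under `u ↦ (1 - ‖u‖²)^(-1/2) (1, u)` onto the hyperboloid, `d_e = tanh` of the hyperbolic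
distance, and the triangle inequality for the latter (a reverse Cauchy–Schwarz inequality for the
Minkowski form) yields `d_e(u, w) ≤ (x + y)/(1 + x y)` with
`x = d_e(u, v)`, `y = d_e(v, w)`. Taking `v = 0` gives the bound on `‖u ⊕ v‖`.
-/

/-- The inverse hyperbolic tangent on `(-1, 1)`. -/
noncomputable def artanh (x : ℝ) : ℝ := (1 / 2) * Real.log ((1 + x) / (1 - x))

/-- The Lorentz factor `γ_u = 1/√(1 - ‖u‖²)`. -/
noncomputable def lorentzGamma {n : ℕ} (u : EuclideanSpace ℝ (Fin n)) : ℝ :=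
  1 / Real.sqrt (1 - ‖u‖ ^ 2)

/-- Einstein addition on the open unit ball of `ℝⁿ`. -/
noncomputable def einsteinAdd {n : ℕ} (u v : EuclideanSpace ℝ (Fin n)) :
    EuclideanSpace ℝ (Fin n) :=
  (1 / (1 + ⟪u, v⟫)) •
    (u + (1 / lorentzGamma u) • v +
      ((lorentzGamma u / (1 + lorentzGamma u)) * ⟪u, v⟫) • u)

/-- The gyroautomorphisms of the Einstein gyrogroup, via the gyrator identity
`gyr[u,v]w = ⊖(u ⊕ v) ⊕ (u ⊕ (v ⊕ w))`. -/
noncomputable def einsteinGyr {n : ℕ} (u v w : EuclideanSpace ℝ (Fin n)) :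
    EuclideanSpace ℝ (Fin n) :=
  einsteinAdd (-(einsteinAdd u v)) (einsteinAdd u (einsteinAdd v w))

section InnerProductSpace

variable {E : Type*} [NormedAddCommGroup E] [InnerProductSpace ℝ E]

lemma one_add_inner_pos {u v : E} (hu : ‖u‖ < 1) (hv : ‖v‖ < 1) : 0 < 1 + ⟪u, v⟫ := by
  have := neg_abs_le ⟪u, v⟫
  nlinarith [abs_real_inner_le_norm u v, norm_nonneg u, norm_nonneg v]

lemma one_sub_inner_pos {u v : E} (hu : ‖u‖ < 1) (hv : ‖v‖ < 1) : 0 < 1 - ⟪u, v⟫ := by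
  have := one_add_inner_pos (norm_neg u ▸ hu) hv
  rw [inner_neg_left] at this
  linarith

lemma one_sub_inner_sq_sub_mul_eq (u v : E) :
    (1 - ⟪u, v⟫) ^ 2 - (1 - ‖u‖ ^ 2) * (1 - ‖v‖ ^ 2) =
      (1 - ‖u‖ ^ 2) * ‖u - v‖ ^ 2 + ⟪u, u - v⟫ ^ 2 := by
  rw [norm_sub_sq_real, inner_sub_right, real_inner_self_eq_norm_sq]
  ring

lemma sq_inner_sub_inner_mul_inner_le {v : E} (hv : ‖v‖ ≤ 1) (m m' : E) :
    (⟪m, m'⟫ - ⟪v, m⟫ * ⟪v, m'⟫) ^ 2 ≤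
      (‖m‖ ^ 2 - ⟪v, m⟫ ^ 2) * (‖m'‖ ^ 2 - ⟪v, m'⟫ ^ 2) := by
  have hpos (z : E) : 0 ≤ ‖z‖ ^ 2 - ⟪v, z⟫ ^ 2 := by
    have hvz : ⟪v, z⟫ ^ 2 ≤ (‖v‖ * ‖z‖) ^ 2 :=
      sq_abs ⟪v, z⟫ ▸ pow_le_pow_left₀ (abs_nonneg _) (abs_real_inner_le_norm v z) 2
    have hv2 : ‖v‖ ^ 2 ≤ 1 := pow_le_one₀ (norm_nonneg v) hv
    nlinarith [mul_le_mul_of_nonneg_right hv2 (sq_nonneg ‖z‖)]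
  have hdisc := discrim_le_zero fun t : ℝ => by
    have h := hpos (m + t • m')
    rw [norm_add_sq_real, norm_smul, inner_add_right, real_inner_smul_right,
      real_inner_smul_right, Real.norm_eq_abs, mul_pow, sq_abs] at h
    exact (le_of_le_of_eq h (by ring) :
      0 ≤ (‖m'‖ ^ 2 - ⟪v, m'⟫ ^ 2) * (t * t) + 2 * (⟪m, m'⟫ - ⟪v, m⟫ * ⟪v, m'⟫) * t +
        (‖m‖ ^ 2 - ⟪v, m⟫ ^ 2))
  rw [discrim] at hdisc
  linarith

lemma add_div_one_add_mul_le_add {x y : ℝ} (hx : 0 ≤ x) (hy : 0 ≤ y) :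
    (x + y) / (1 + x * y) ≤ x + y :=
  div_le_self (by positivity) (by nlinarith [mul_nonneg hx hy])

end InnerProductSpace

section Einstein

variable {n : ℕ}

@[simp]
lemma einsteinAdd_zero (u : EuclideanSpace ℝ (Fin n)) : einsteinAdd u 0 = u := by
  simp [einsteinAdd]

@[simp]
lemma zero_einsteinAdd (v : EuclideanSpace ℝ (Fin n)) : einsteinAdd 0 v = v := by
  simp [einsteinAdd, lorentzGamma]

lemma einsteinAdd_eq_smul_add_smul {u : EuclideanSpace ℝ (Fin n)} (hu : ‖u‖ < 1)
    (v : EuclideanSpace ℝ (Fin n)) :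
    einsteinAdd u v =
      ((1 + √(1 - ‖u‖ ^ 2) + ⟪u, v⟫) / ((1 + ⟪u, v⟫) * (1 + √(1 - ‖u‖ ^ 2)))) • u +
        (√(1 - ‖u‖ ^ 2) / (1 + ⟪u, v⟫)) • v := by
  have hs : 0 < √(1 - ‖u‖ ^ 2) := Real.sqrt_pos.2 (by nlinarith [norm_nonneg u])
  rw [einsteinAdd, lorentzGamma]
  by_cases hp : 1 + ⟪u, v⟫ = 0
  · simp [hp]
  match_scalars <;> field_simp
  ring

lemma one_sub_inner_einsteinAdd_einsteinAdd {u : EuclideanSpace ℝ (Fin n)} (hu : ‖u‖ < 1)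
    {a b : EuclideanSpace ℝ (Fin n)} (ha : ‖a‖ < 1) (hb : ‖b‖ < 1) :
    (1 - ⟪einsteinAdd u a, einsteinAdd u b⟫) * (1 + ⟪u, a⟫) * (1 + ⟪u, b⟫) =
      (1 - ‖u‖ ^ 2) * (1 - ⟪a, b⟫) := by
  have hpa := (one_add_inner_pos hu ha).ne'
  have hpb := (one_add_inner_pos hu hb).ne'
  rw [einsteinAdd_eq_smul_add_smul hu, einsteinAdd_eq_smul_add_smul hu]
  simp only [inner_add_left, inner_add_right, real_inner_smul_left, real_inner_smul_right,
    real_inner_self_eq_norm_sq, real_inner_comm u a]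
  have hu2 : ‖u‖ ^ 2 = 1 - √(1 - ‖u‖ ^ 2) ^ 2 := by
    rw [Real.sq_sqrt (by nlinarith [norm_nonneg u])]; ring
  have hs : 0 ≤ √(1 - ‖u‖ ^ 2) := Real.sqrt_nonneg _
  generalize √(1 - ‖u‖ ^ 2) = s at hs hu2 ⊢
  rw [hu2]
  have : 1 + s ≠ 0 := by positivity
  field_simp
  ring

lemma one_sub_norm_sq_einsteinAdd {u v : EuclideanSpace ℝ (Fin n)} (hu : ‖u‖ < 1)
    (hv : ‖v‖ < 1) :
    (1 - ‖einsteinAdd u v‖ ^ 2) * (1 + ⟪u, v⟫) ^ 2 = (1 - ‖u‖ ^ 2) * (1 - ‖v‖ ^ 2) := by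
  have h := one_sub_inner_einsteinAdd_einsteinAdd hu hv hv
  rw [real_inner_self_eq_norm_sq, real_inner_self_eq_norm_sq] at h
  linear_combination h

lemma one_sub_norm_sq_einsteinAdd_neg {u v : EuclideanSpace ℝ (Fin n)} (hu : ‖u‖ < 1)
    (hv : ‖v‖ < 1) :
    (1 - ‖einsteinAdd (-u) v‖ ^ 2) * (1 - ⟪u, v⟫) ^ 2 = (1 - ‖u‖ ^ 2) * (1 - ‖v‖ ^ 2) := by
  have h := one_sub_norm_sq_einsteinAdd (u := -u) (by rwa [norm_neg]) hv
  rwa [norm_neg, inner_neg_left, ← sub_eq_add_neg] at h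

lemma norm_einsteinAdd_lt_one {u v : EuclideanSpace ℝ (Fin n)} (hu : ‖u‖ < 1)
    (hv : ‖v‖ < 1) : ‖einsteinAdd u v‖ < 1 := by
  have h := one_sub_norm_sq_einsteinAdd hu hv
  have hp := one_add_inner_pos hu hv
  have hpos : 0 < (1 - ‖u‖ ^ 2) * (1 - ‖v‖ ^ 2) :=
    mul_pos (by nlinarith [norm_nonneg u]) (by nlinarith [norm_nonneg v])
  have : 0 < 1 - ‖einsteinAdd u v‖ ^ 2 := pos_of_mul_pos_left (h ▸ hpos) (by positivity)
  nlinarith [norm_nonneg (einsteinAdd u v)]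

lemma norm_einsteinAdd_neg_eq_zero_iff {u v : EuclideanSpace ℝ (Fin n)} (hu : ‖u‖ < 1)
    (hv : ‖v‖ < 1) : ‖einsteinAdd (-u) v‖ = 0 ↔ u = v := by
  have hA : 0 < 1 - ‖u‖ ^ 2 := by nlinarith [norm_nonneg u]
  have hp := (one_sub_inner_pos hu hv).ne'
  have key : ‖einsteinAdd (-u) v‖ ^ 2 * (1 - ⟪u, v⟫) ^ 2 =
      (1 - ‖u‖ ^ 2) * ‖u - v‖ ^ 2 + ⟪u, u - v⟫ ^ 2 := by
    linear_combination one_sub_inner_sq_sub_mul_eq u v - one_sub_norm_sq_einsteinAdd_neg hu hv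
  constructor
  · intro h
    rw [h, zero_pow two_ne_zero, zero_mul, eq_comm,
      add_eq_zero_iff_of_nonneg (by positivity) (by positivity)] at key
    have huv := (mul_eq_zero.1 key.1).resolve_left hA.ne'
    exact sub_eq_zero.1 (norm_eq_zero.1 (pow_eq_zero_iff two_ne_zero |>.1 huv))
  · rintro rfl
    simpa [hA.ne'] using key

lemma norm_einsteinAdd_neg_comm {u v : EuclideanSpace ℝ (Fin n)} (hu : ‖u‖ < 1)
    (hv : ‖v‖ < 1) : ‖einsteinAdd (-u) v‖ = ‖einsteinAdd (-v) u‖ := by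
  have hp := (one_sub_inner_pos hu hv).ne'
  have h := one_sub_norm_sq_einsteinAdd_neg hu hv
  rw [mul_comm (1 - ‖u‖ ^ 2), ← one_sub_norm_sq_einsteinAdd_neg hv hu, real_inner_comm u v] at h
  have := mul_right_cancel₀ (pow_ne_zero 2 hp) h
  rw [← sq_eq_sq₀ (norm_nonneg _) (norm_nonneg _)]
  linarith

lemma norm_einsteinAdd_neg_einsteinAdd {u a b : EuclideanSpace ℝ (Fin n)} (hu : ‖u‖ < 1)
    (ha : ‖a‖ < 1) (hb : ‖b‖ < 1) :
    ‖einsteinAdd (-einsteinAdd u a) (einsteinAdd u b)‖ = ‖einsteinAdd (-a) b‖ := by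
  have hua := norm_einsteinAdd_lt_one hu ha
  have hub := norm_einsteinAdd_lt_one hu hb
  have hS : 0 < 1 - ‖u‖ ^ 2 := by nlinarith [norm_nonneg u]
  have hK : (1 - ‖u‖ ^ 2) ^ 2 * (1 - ⟪a, b⟫) ^ 2 ≠ 0 :=
    mul_ne_zero (pow_ne_zero 2 hS.ne') (pow_ne_zero 2 (one_sub_inner_pos ha hb).ne')
  have key : (1 - ‖einsteinAdd (-einsteinAdd u a) (einsteinAdd u b)‖ ^ 2) *
        ((1 - ‖u‖ ^ 2) ^ 2 * (1 - ⟪a, b⟫) ^ 2) =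
      (1 - ‖einsteinAdd (-a) b‖ ^ 2) * ((1 - ‖u‖ ^ 2) ^ 2 * (1 - ⟪a, b⟫) ^ 2) := by
    linear_combination
      ((1 + ⟪u, a⟫) * (1 + ⟪u, b⟫)) ^ 2 * one_sub_norm_sq_einsteinAdd_neg hua hub -
      (1 - ‖einsteinAdd (-einsteinAdd u a) (einsteinAdd u b)‖ ^ 2) *
        ((1 - ⟪einsteinAdd u a, einsteinAdd u b⟫) * (1 + ⟪u, a⟫) * (1 + ⟪u, b⟫) +
          (1 - ‖u‖ ^ 2) * (1 - ⟪a, b⟫)) * one_sub_inner_einsteinAdd_einsteinAdd hu ha hb +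
      (1 - ‖einsteinAdd u b‖ ^ 2) * (1 + ⟪u, b⟫) ^ 2 * one_sub_norm_sq_einsteinAdd hu ha +
      (1 - ‖u‖ ^ 2) * (1 - ‖a‖ ^ 2) * one_sub_norm_sq_einsteinAdd hu hb -
      (1 - ‖u‖ ^ 2) ^ 2 * one_sub_norm_sq_einsteinAdd_neg ha hb
  rw [← sq_eq_sq₀ (norm_nonneg _) (norm_nonneg _)]
  linarith [mul_right_cancel₀ hK key]

lemma norm_einsteinGyr {u v w : EuclideanSpace ℝ (Fin n)} (hu : ‖u‖ < 1) (hv : ‖v‖ < 1)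
    (hw : ‖w‖ < 1) : ‖einsteinGyr u v w‖ = ‖w‖ := by
  rw [einsteinGyr, norm_einsteinAdd_neg_einsteinAdd hu hv (norm_einsteinAdd_lt_one hv hw)]
  simpa using norm_einsteinAdd_neg_einsteinAdd (a := 0) hv (by simp) hw

/-- The reverse Cauchy–Schwarz inequality of the hyperboloid model, obtained from Cauchy–Schwarz
for the positive semidefinite form `⟪m, m'⟫ - ⟪v, m⟫ ⟪v, m'⟫`. -/
lemma one_sub_inner_mul_le {u v w : EuclideanSpace ℝ (Fin n)} (hu : ‖u‖ < 1) (hv : ‖v‖ < 1)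
    (hw : ‖w‖ < 1) :
    (1 - ⟪u, w⟫) * (1 - ‖v‖ ^ 2) ≤
      (1 - ⟪u, v⟫) * (1 - ⟪v, w⟫) *
        (1 + ‖einsteinAdd (-u) v‖ * ‖einsteinAdd (-v) w‖) := by
  have hB : 0 < 1 - ‖v‖ ^ 2 := by nlinarith [norm_nonneg v]
  have hp := one_sub_inner_pos hu hv
  have hq := one_sub_inner_pos hv hw
  have hx := one_sub_norm_sq_einsteinAdd_neg hu hv
  have hy := one_sub_norm_sq_einsteinAdd_neg hv hw
  set x := ‖einsteinAdd (-u) v‖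
  set y := ‖einsteinAdd (-v) w‖
  set M := (1 - ‖v‖ ^ 2) • u - (1 - ⟪u, v⟫) • v
  set N := (1 - ‖v‖ ^ 2) • w - (1 - ⟪v, w⟫) • v
  have hM : ‖M‖ ^ 2 - ⟪v, M⟫ ^ 2 = (1 - ‖v‖ ^ 2) * (x * (1 - ⟪u, v⟫)) ^ 2 := by
    simp only [M, norm_sub_sq_real, norm_smul, Real.norm_eq_abs, real_inner_smul_left,
      real_inner_smul_right, inner_sub_right, real_inner_self_eq_norm_sq, mul_pow, sq_abs,
      real_inner_comm u v]
    linear_combination (1 - ‖v‖ ^ 2) * hx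
  have hN : ‖N‖ ^ 2 - ⟪v, N⟫ ^ 2 = (1 - ‖v‖ ^ 2) * (y * (1 - ⟪v, w⟫)) ^ 2 := by
    simp only [N, norm_sub_sq_real, norm_smul, Real.norm_eq_abs, real_inner_smul_left,
      real_inner_smul_right, inner_sub_right, real_inner_self_eq_norm_sq, mul_pow, sq_abs,
      real_inner_comm v w]
    linear_combination (1 - ‖v‖ ^ 2) * hy
  have hMN : ⟪M, N⟫ - ⟪v, M⟫ * ⟪v, N⟫ =
      (1 - ‖v‖ ^ 2) * ((1 - ⟪u, v⟫) * (1 - ⟪v, w⟫) - (1 - ⟪u, w⟫) * (1 - ‖v‖ ^ 2)) := by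
    simp only [M, N, inner_sub_left, inner_sub_right, real_inner_smul_left,
      real_inner_smul_right, real_inner_self_eq_norm_sq, real_inner_comm u v]
    ring
  have hCS := sq_inner_sub_inner_mul_inner_le hv.le M N
  rw [hM, hN, hMN] at hCS
  have hxy : 0 ≤ (1 - ‖v‖ ^ 2) * (x * (1 - ⟪u, v⟫)) * (y * (1 - ⟪v, w⟫)) := by positivity
  have hbound := (abs_le_of_sq_le_sq' (le_of_le_of_eq hCS (by ring)) hxy).1
  nlinarith

lemma norm_einsteinAdd_neg_le {u v w : EuclideanSpace ℝ (Fin n)} (hu : ‖u‖ < 1)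
    (hv : ‖v‖ < 1) (hw : ‖w‖ < 1) :
    ‖einsteinAdd (-u) w‖ ≤
      (‖einsteinAdd (-u) v‖ + ‖einsteinAdd (-v) w‖) /
        (1 + ‖einsteinAdd (-u) v‖ * ‖einsteinAdd (-v) w‖) := by
  have hp := one_sub_inner_pos hu hv
  have hq := one_sub_inner_pos hv hw
  have ht := one_sub_inner_pos hu hw
  have hB : 0 < 1 - ‖v‖ ^ 2 := by nlinarith [norm_nonneg v]
  have hAC : 0 < (1 - ‖u‖ ^ 2) * (1 - ‖w‖ ^ 2) :=
    mul_pos (by nlinarith [norm_nonneg u]) (by nlinarith [norm_nonneg w])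
  have hx := one_sub_norm_sq_einsteinAdd_neg hu hv
  have hy := one_sub_norm_sq_einsteinAdd_neg hv hw
  have hz := one_sub_norm_sq_einsteinAdd_neg hu hw
  have key := one_sub_inner_mul_le hu hv hw
  set x := ‖einsteinAdd (-u) v‖
  set y := ‖einsteinAdd (-v) w‖
  set z := ‖einsteinAdd (-u) w‖
  have hxy : 0 ≤ x * y := by positivity
  have hz2 : 0 ≤ 1 - z ^ 2 := nonneg_of_mul_nonneg_left (hz ▸ hAC.le) (by positivity)
  have hsq : ((1 - ⟪u, w⟫) * (1 - ‖v‖ ^ 2)) ^ 2 ≤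
      ((1 - ⟪u, v⟫) * (1 - ⟪v, w⟫) * (1 + x * y)) ^ 2 :=
    pow_le_pow_left₀ (by positivity) key 2
  have hpq : (1 - x ^ 2) * (1 - y ^ 2) * ((1 - ⟪u, v⟫) * (1 - ⟪v, w⟫)) ^ 2 ≤
      (1 - z ^ 2) * (1 + x * y) ^ 2 * ((1 - ⟪u, v⟫) * (1 - ⟪v, w⟫)) ^ 2 :=
    calc (1 - x ^ 2) * (1 - y ^ 2) * ((1 - ⟪u, v⟫) * (1 - ⟪v, w⟫)) ^ 2
        = (1 - z ^ 2) * ((1 - ⟪u, w⟫) * (1 - ‖v‖ ^ 2)) ^ 2 := by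
          linear_combination (1 - y ^ 2) * (1 - ⟪v, w⟫) ^ 2 * hx +
            (1 - ‖u‖ ^ 2) * (1 - ‖v‖ ^ 2) * hy - (1 - ‖v‖ ^ 2) ^ 2 * hz
      _ ≤ (1 - z ^ 2) * ((1 - ⟪u, v⟫) * (1 - ⟪v, w⟫) * (1 + x * y)) ^ 2 :=
          mul_le_mul_of_nonneg_left hsq hz2
      _ = (1 - z ^ 2) * (1 + x * y) ^ 2 * ((1 - ⟪u, v⟫) * (1 - ⟪v, w⟫)) ^ 2 := by ring
  have h := le_of_mul_le_mul_right hpq (by positivity)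
  rw [le_div_iff₀ (by positivity), ← sq_le_sq₀ (by positivity) (by positivity)]
  linear_combination h

lemma norm_einsteinAdd_le {u v : EuclideanSpace ℝ (Fin n)} (hu : ‖u‖ < 1) (hv : ‖v‖ < 1) :
    ‖einsteinAdd u v‖ ≤ (‖u‖ + ‖v‖) / (1 + ‖u‖ * ‖v‖) := by
  simpa using norm_einsteinAdd_neg_le (u := -u) (v := 0) (by rwa [norm_neg]) (by simp) hv

end Einstein

/-- The Euclidean norm is a gyronorm on the Einstein gyrogroup; in particular
`‖u ⊕_E v‖ ≤ (‖u‖ + ‖v‖)/(1 + ‖u‖‖v‖) ≤ ‖u‖ + ‖v‖` for all `u, v ∈ 𝔹`, and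
consequently the Einstein gyrometric `d_e(u,v) = ‖(−u) ⊕_E v‖` is a metric on the
open unit ball `𝔹` of `ℝⁿ`. -/
theorem euclidean_norm_gyronorm_einstein (n : ℕ)
    (de : EuclideanSpace ℝ (Fin n) → EuclideanSpace ℝ (Fin n) → ℝ)
    (hde : ∀ u v, de u v = ‖einsteinAdd (-u) v‖) :
    (∀ u v : EuclideanSpace ℝ (Fin n), ‖u‖ < 1 → ‖v‖ < 1 →
      ‖einsteinAdd u v‖ ≤ (‖u‖ + ‖v‖) / (1 + ‖u‖ * ‖v‖) ∧
      (‖u‖ + ‖v‖) / (1 + ‖u‖ * ‖v‖) ≤ ‖u‖ + ‖v‖) ∧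
    (∀ u v w : EuclideanSpace ℝ (Fin n), ‖u‖ < 1 → ‖v‖ < 1 → ‖w‖ < 1 →
      ‖einsteinGyr u v w‖ = ‖w‖) ∧
    (∀ u v : EuclideanSpace ℝ (Fin n), ‖u‖ < 1 → ‖v‖ < 1 → 0 ≤ de u v) ∧
    (∀ u v : EuclideanSpace ℝ (Fin n), ‖u‖ < 1 → ‖v‖ < 1 → (de u v = 0 ↔ u = v)) ∧
    (∀ u v : EuclideanSpace ℝ (Fin n), ‖u‖ < 1 → ‖v‖ < 1 → de u v = de v u) ∧
    (∀ u v w : EuclideanSpace ℝ (Fin n), ‖u‖ < 1 → ‖v‖ < 1 → ‖w‖ < 1 →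
      de u w ≤ de u v + de v w) := by
  refine ⟨fun u v hu hv => ⟨norm_einsteinAdd_le hu hv,
      add_div_one_add_mul_le_add (norm_nonneg u) (norm_nonneg v)⟩,
    fun u v w hu hv hw => norm_einsteinGyr hu hv hw,
    fun u v _ _ => hde u v ▸ norm_nonneg _,
    fun u v hu hv => hde u v ▸ norm_einsteinAdd_neg_eq_zero_iff hu hv,
    fun u v hu hv => by rw [hde, hde]; exact norm_einsteinAdd_neg_comm hu hv,
    fun u v w hu hv hw => ?_⟩
  simp only [hde]
  exact (norm_einsteinAdd_neg_le hu hv hw).trans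
    (add_div_one_add_mul_le_add (norm_nonneg _) (norm_nonneg _))
end

section
/- Let G be a gyrogroup with a gyronorm and gyronorm metric d(x,y) = ‖⊖x ⊕ y‖. Then G is homogeneous: for all x, y ∈ G there exists a surjective isometry T : G → G of (G, d) with T(x) = y (one may take T = L_y ∘ L_{⊖x}, the composition of the left gyrotranslations by ⊖x and then by y). -/
/-- A gyrogroup: a set with a binary operation `add`, identity `e`, inversion `neg`,
and gyroautomorphisms `gyr` satisfying the gyrogroup axioms. -/
structure Gyrogroup (G : Type*) where
  add : G → G → G
  e : G
  neg : G → G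
  gyr : G → G → G → G
  e_add : ∀ a, add e a = a
  add_e : ∀ a, add a e = a
  neg_add : ∀ a, add (neg a) a = e
  add_neg : ∀ a, add a (neg a) = e
  gyr_bijective : ∀ a b, Function.Bijective (gyr a b)
  gyr_add : ∀ a b x y, gyr a b (add x y) = add (gyr a b x) (gyr a b y)
  left_gyroassoc : ∀ a b c, add a (add b c) = add (add a b) (gyr a b c)
  left_loop : ∀ a b, gyr (add a b) b = gyr a b

/-- A gyronorm on a gyrogroup. -/
structure Gyronorm {G : Type*} (gg : Gyrogroup G) where
  toFun : G → ℝ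
  nonneg : ∀ x, 0 ≤ toFun x
  eq_zero_iff : ∀ x, toFun x = 0 ↔ x = gg.e
  neg_eq : ∀ x, toFun (gg.neg x) = toFun x
  subadd : ∀ x y, toFun (gg.add x y) ≤ toFun x + toFun y
  gyr_eq : ∀ a b x, toFun (gg.gyr a b x) = toFun x

/-!
By the gyrotranslation theorem `⊖(a ⊕ p) ⊕ (a ⊕ q) = gyr[a, p](⊖p ⊕ q)` and the gyration
invariance of the gyronorm, every left gyrotranslation `L_a` preserves `d`; it is a bijection
with inverse `L_{⊖a}`. So `L_y ∘ L_{⊖x}` is a surjective isometry, and it sends `x` to `y`.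
-/

namespace Gyrogroup

variable {G : Type*} (gg : Gyrogroup G)

theorem add_left_cancel {a u v : G} (h : gg.add a u = gg.add a v) : u = v := by
  have h' := congrArg (gg.add (gg.neg a)) h
  rw [gg.left_gyroassoc, gg.left_gyroassoc, gg.neg_add, gg.e_add, gg.e_add] at h'
  exact (gg.gyr_bijective _ _).injective h'

theorem gyr_e_left (a c : G) : gg.gyr gg.e a c = c :=
  gg.add_left_cancel (a := a) <| by
    simpa only [gg.e_add] using (gg.left_gyroassoc gg.e a c).symm

theorem gyr_neg_self (a c : G) : gg.gyr (gg.neg a) a c = c := by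
  rw [← gg.left_loop, gg.neg_add, gyr_e_left]

theorem gyr_self_neg (a c : G) : gg.gyr a (gg.neg a) c = c := by
  rw [← gg.left_loop, gg.add_neg, gyr_e_left]

theorem neg_add_cancel_left (a b : G) : gg.add (gg.neg a) (gg.add a b) = b := by
  rw [gg.left_gyroassoc, gg.neg_add, gg.e_add, gyr_neg_self]

theorem add_neg_cancel_left (a b : G) : gg.add a (gg.add (gg.neg a) b) = b := by
  rw [gg.left_gyroassoc, gg.add_neg, gg.e_add, gyr_self_neg]

def leftGyrotranslation (a : G) : G ≃ G where
  toFun := gg.add a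
  invFun := gg.add (gg.neg a)
  left_inv := gg.neg_add_cancel_left a
  right_inv := gg.add_neg_cancel_left a

/-- Ungar's gyrotranslation theorem. -/
theorem neg_add_add_left (a p q : G) :
    gg.add (gg.neg (gg.add a p)) (gg.add a q) = gg.gyr a p (gg.add (gg.neg p) q) := by
  calc gg.add (gg.neg (gg.add a p)) (gg.add a q)
      = gg.add (gg.neg (gg.add a p))
          (gg.add (gg.add a p) (gg.gyr a p (gg.add (gg.neg p) q))) := by
        rw [← gg.left_gyroassoc, gg.add_neg_cancel_left]
    _ = gg.gyr a p (gg.add (gg.neg p) q) := gg.neg_add_cancel_left _ _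

end Gyrogroup

theorem Gyronorm.neg_add_add_left {G : Type*} {gg : Gyrogroup G} (nm : Gyronorm gg)
    (a p q : G) :
    nm.toFun (gg.add (gg.neg (gg.add a p)) (gg.add a q)) = nm.toFun (gg.add (gg.neg p) q) := by
  rw [gg.neg_add_add_left, nm.gyr_eq]

/-- A normed gyrogroup is homogeneous: any point can be mapped to any other point by a
surjective isometry of the gyronorm metric, namely `T = L_y ∘ L_{⊖x}`. -/
theorem normed_gyrogroup_homogeneous {G : Type*} (gg : Gyrogroup G) (nm : Gyronorm gg)
    (d : G → G → ℝ) (hd : ∀ x y, d x y = nm.toFun (gg.add (gg.neg x) y)) :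
    ∀ x y : G, ∃ T : G → G, Function.Surjective T ∧
      (∀ p q, d (T p) (T q) = d p q) ∧ T x = y := by
  intro x y
  refine ⟨(gg.leftGyrotranslation (gg.neg x)).trans (gg.leftGyrotranslation y),
    Equiv.surjective _, fun p q => ?_, ?_⟩
  · simp only [hd, Equiv.trans_apply, Gyrogroup.leftGyrotranslation, Equiv.coe_fn_mk,
      nm.neg_add_add_left]
  · simp only [Equiv.trans_apply, Gyrogroup.leftGyrotranslation, Equiv.coe_fn_mk, gg.neg_add,
      gg.add_e]
end
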